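/- arXiv:2401.04922 — 8 statements merged into one kernel-verified Lean document; each statement's English description precedes it below -/
import Mathlib

section
/- For all positive integers a and b, every 2-coloring of the edges of the complete bipartite graph K_{n,k} with n = a·2^{2b} left vertices and k = 2b right vertices contains a monochromatic complete bipartite subgraph K_{a,b} (i.e., there exist a left vertices and b right vertices such that all ab edges between them have the same color). -/
open Finset

/-
Pigeonhole twice. Sorting the `a · 2^(2b)` left vertices by their colour pattern on the right
side, one of the `2^(2b)` patterns is shared by `a` left vertices; that pattern colours the `2b`
right vertices with two colours, so some colour is taken by `b` of them.
-/

theorem exists_card_eq_const_of_mul_le_card {α δ : Type*} [Fintype α] [Fintype δ] [Nonempty δ]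
    (f : α → δ) {a : ℕ} (h : Fintype.card δ * a ≤ Fintype.card α) :
    ∃ (A : Finset α) (d : δ), #A = a ∧ ∀ x ∈ A, f x = d := by
  classical
  obtain ⟨d, hd⟩ := Fintype.exists_le_card_fiber_of_mul_le_card f h
  obtain ⟨A, hA, rfl⟩ := exists_subset_card_eq hd
  exact ⟨A, d, rfl, fun x hx => by simpa using hA hx⟩

theorem exists_monochromatic_rectangle {α β γ : Type*} [Fintype α] [Fintype β] [Fintype γ]
    [Nonempty γ] (col : α → β → γ) {a b : ℕ}
    (ha : Fintype.card γ ^ Fintype.card β * a ≤ Fintype.card α)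
    (hb : Fintype.card γ * b ≤ Fintype.card β) :
    ∃ (A : Finset α) (B : Finset β) (c : γ), #A = a ∧ #B = b ∧ ∀ x ∈ A, ∀ y ∈ B, col x y = c := by
  classical
  obtain ⟨A, p, hAcard, hA⟩ := exists_card_eq_const_of_mul_le_card col (by simpa using ha)
  obtain ⟨B, c, hBcard, hB⟩ := exists_card_eq_const_of_mul_le_card p hb
  exact ⟨A, B, c, hAcard, hBcard, fun x hx y hy => by rw [hA x hx, hB y hy]⟩

theorem stmt_0_general (a b : ℕ)
    (COL : Fin (a * 2 ^ (2 * b)) → Fin (2 * b) → Fin 2) :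
    ∃ (A : Finset (Fin (a * 2 ^ (2 * b)))) (B : Finset (Fin (2 * b))) (c : Fin 2),
      A.card = a ∧ B.card = b ∧ ∀ x ∈ A, ∀ y ∈ B, COL x y = c :=
  exists_monochromatic_rectangle COL (by simp [mul_comm]) (by simp)

/-- Bipartite Ramsey with explicit bounds: every 2-coloring of the edges of
`K_{a·2^(2b), 2b}` contains a monochromatic `K_{a,b}`. -/
theorem stmt_0 (a b : ℕ) (ha : 0 < a) (hb : 0 < b)
    (COL : Fin (a * 2 ^ (2 * b)) → Fin (2 * b) → Fin 2) :
    ∃ (A : Finset (Fin (a * 2 ^ (2 * b)))) (B : Finset (Fin (2 * b))) (c : Fin 2),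
      A.card = a ∧ B.card = b ∧ ∀ x ∈ A, ∀ y ∈ B, COL x y = c :=
  stmt_0_general a b COL
end

section
/- Let n = R, where R is any number large enough that every coloring of the 3-element subsets of [n] with 2·C(3,2) = 6 colors admits a homogeneous set of size 9. Then for every 2-coloring COL of the edges of B_{n,3}, there exists an induced monochromatic copy of B_{4,2}: i.e., there exist 4 left vertices and 6 right vertices of B_{n,3} inducing a subgraph isomorphic to B_{4,2}, all of whose edges receive the same color under COL. -/
/-!
Colour a triple `X = {x₀ < x₁ < x₂}` by a pair `(p, k)` such that every `xᵢ` with `i ≠ p` gets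
colour `k` under `COL (·) X`; such a pair exists by pigeonhole, so this is a 6-colouring. In a
homogeneous set `h₀ < ⋯ < h₈` take the left vertices `h₁, h₃, h₅, h₇` and, for a pair `a < b`,
the right vertex `{h_{2a+1}, h_{2b+1}, z}` with `z` of even index placed so that it has rank `p`
in the triple. The two left vertices of every right vertex then have colour `k`, and the parity of
the indices keeps the copy induced.
-/

open Finset

namespace InducedRamseyB42

variable {α : Type*} [LinearOrder α]

/-- For `x ∈ X`, the position of `x` in `X`, counting from `0`. -/
def rank (X : Finset α) (x : α) : ℕ := #{y ∈ X | y < x}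

lemma rank_lt_card {X : Finset α} {x : α} (hx : x ∈ X) : rank X x < #X :=
  card_lt_card (filter_ssubset.2 ⟨x, hx, lt_irrefl x⟩)

lemma rank_lt_rank {X : Finset α} {x y : α} (hx : x ∈ X) (hxy : x < y) :
    rank X x < rank X y :=
  card_lt_card <| (ssubset_iff_of_subset fun _ hz =>
      mem_filter.2 ⟨(mem_filter.1 hz).1, (mem_filter.1 hz).2.trans hxy⟩).2
    ⟨x, mem_filter.2 ⟨hx, hxy⟩, fun h => lt_irrefl x (mem_filter.1 h).2⟩

lemma rank_injOn (X : Finset α) : Set.InjOn (rank X) X := by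
  intro x hx y hy hxy
  by_contra hne
  rcases lt_or_gt_of_ne hne with h | h
  · exact (rank_lt_rank hx h).ne hxy
  · exact (rank_lt_rank hy h).ne' hxy

def IsPattern (c : α → Fin 2) (X : Finset α) (q : Fin 3 × Fin 2) : Prop :=
  ∀ x ∈ X, rank X x ≠ q.1 → c x = q.2

lemma exists_isPattern {X : Finset α} (hX : #X = 3) (c : α → Fin 2) : ∃ q, IsPattern c X q := by
  obtain ⟨x, hx, y, hy, hxy, hc⟩ :=
    exists_ne_map_eq_of_card_lt_of_maps_to (s := X) (t := univ) (by simp [hX])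
      fun a _ => mem_univ (c a)
  have hxyX : {x, y} ⊆ X := insert_subset hx (singleton_subset_iff.2 hy)
  obtain ⟨z, hz⟩ : ∃ z, X \ {x, y} = {z} := card_eq_one.1 <| by
    rw [card_sdiff_of_subset hxyX, hX, card_pair hxy]
  have hzX : z ∈ X := (mem_sdiff.1 (hz ▸ mem_singleton_self z)).1
  refine ⟨(⟨rank X z, hX ▸ rank_lt_card hzX⟩, c x), fun w hw hrank => ?_⟩
  by_cases hwxy : w = x ∨ w = y
  · rcases hwxy with rfl | rfl
    · rfl
    · exact hc.symm
  · have : w ∈ X \ {x, y} := mem_sdiff.2 ⟨hw, by simpa using hwxy⟩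
    rw [hz, mem_singleton] at this
    exact absurd (congrArg (rank X) this) hrank

/-- A pattern `(p, k)` encoded in `Fin 6`; arbitrary on sets that are not triples. -/
noncomputable def patternColour (COL : α → Finset α → Fin 2) (X : Finset α) : Fin 6 :=
  finProdFinEquiv (Classical.epsilon (IsPattern (COL · X) X))

lemma isPattern_of_patternColour_eq {COL : α → Finset α → Fin 2} {X : Finset α} (hX : #X = 3)
    {c : Fin 6} (hc : patternColour COL X = c) :
    IsPattern (COL · X) X (finProdFinEquiv.symm c) := by
  rw [← hc, patternColour, Equiv.symm_apply_apply]
  exact Classical.epsilon_spec (exists_isPattern hX _)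

def leftIndex (i : Fin 4) : Fin 9 := ⟨2 * i + 1, by omega⟩

lemma sup_val_lt_four (S : Finset (Fin 4)) : S.sup Fin.val < 4 :=
  (Finset.sup_lt_iff (by norm_num)).2 fun i _ => i.isLt

def anchorIndex : Fin 3 → Finset (Fin 4) → Fin 9
  | 0, _ => 0
  | 1, S => ⟨2 * S.sup Fin.val, by have := sup_val_lt_four S; omega⟩
  | 2, _ => 8

lemma leftIndex_strictMono : StrictMono leftIndex := fun a b h => by
  simp only [leftIndex, Fin.mk_lt_mk]
  rw [Fin.lt_def] at h
  omega

lemma leftIndex_ne_anchorIndex (i : Fin 4) (p : Fin 3) (S : Finset (Fin 4)) :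
    leftIndex i ≠ anchorIndex p S := by
  revert i p S
  decide

lemma card_filter_leftIndex_lt_anchorIndex (p : Fin 3) {S : Finset (Fin 4)} (hS : #S = 2) :
    #{i ∈ S | leftIndex i < anchorIndex p S} = p := by
  revert p S
  decide

section Copy

variable {e : Fin 9 → α}

def leftVertex (e : Fin 9 → α) (i : Fin 4) : α := e (leftIndex i)

def rightVertex (e : Fin 9 → α) (p : Fin 3) (S : Finset (Fin 4)) : Finset α :=
  insert (e (anchorIndex p S)) (S.image (leftVertex e))

lemma leftVertex_injective (he : StrictMono e) : Function.Injective (leftVertex e) :=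
  he.injective.comp leftIndex_strictMono.injective

lemma leftVertex_ne_anchor (he : StrictMono e) (i : Fin 4) (p : Fin 3) (S : Finset (Fin 4)) :
    leftVertex e i ≠ e (anchorIndex p S) :=
  he.injective.ne (leftIndex_ne_anchorIndex i p S)

lemma leftVertex_mem_rightVertex_iff (he : StrictMono e) {i : Fin 4} {p : Fin 3}
    {S : Finset (Fin 4)} : leftVertex e i ∈ rightVertex e p S ↔ i ∈ S := by
  rw [rightVertex, mem_insert, (leftVertex_injective he).mem_finset_image]
  exact or_iff_right (leftVertex_ne_anchor he i p S)

lemma rightVertex_injective (he : StrictMono e) (p : Fin 3) :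
    Function.Injective (rightVertex e p) := fun S T h => by
  ext i
  rw [← leftVertex_mem_rightVertex_iff he, h, leftVertex_mem_rightVertex_iff he]

lemma card_rightVertex (he : StrictMono e) (p : Fin 3) {S : Finset (Fin 4)} (hS : #S = 2) :
    #(rightVertex e p S) = 3 := by
  rw [rightVertex, card_insert_of_notMem, card_image_of_injective _ (leftVertex_injective he), hS]
  simp only [mem_image, not_exists, not_and]
  exact fun i _ => leftVertex_ne_anchor he i p S

lemma rightVertex_subset {A : Finset α} (heA : ∀ j, e j ∈ A) (p : Fin 3) (S : Finset (Fin 4)) :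
    rightVertex e p S ⊆ A :=
  insert_subset (heA _) (image_subset_iff.2 fun i _ => heA (leftIndex i))

lemma rank_anchor (he : StrictMono e) (p : Fin 3) {S : Finset (Fin 4)} (hS : #S = 2) :
    rank (rightVertex e p S) (e (anchorIndex p S)) = p := by
  rw [rank, rightVertex, filter_insert, if_neg (lt_irrefl _), filter_image,
    card_image_of_injective _ (leftVertex_injective he)]
  simp only [leftVertex, he.lt_iff_lt]
  exact card_filter_leftIndex_lt_anchorIndex p hS

lemma colour_leftVertex_rightVertex (he : StrictMono e) {COL : α → Finset α → Fin 2}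
    {p : Fin 3} {k : Fin 2} {S : Finset (Fin 4)} (hS : #S = 2)
    (hpat : IsPattern (COL · (rightVertex e p S)) (rightVertex e p S) (p, k)) {i : Fin 4}
    (hi : i ∈ S) : COL (leftVertex e i) (rightVertex e p S) = k := by
  refine hpat _ ((leftVertex_mem_rightVertex_iff he).2 hi) fun hrank => ?_
  refine leftVertex_ne_anchor he i p S <| rank_injOn _ ((leftVertex_mem_rightVertex_iff he).2 hi)
    (mem_insert_self _ _) ?_
  rw [hrank, rank_anchor he p hS]

end Copy

theorem exists_induced_monochromatic_B42 (COL : α → Finset α → Fin 2) {A H : Finset α}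
    (hHA : H ⊆ A) (hH : #H = 9) (q : Fin 3 × Fin 2)
    (hq : ∀ X ⊆ H, #X = 3 → IsPattern (COL · X) X q) :
    ∃ (f : Fin 4 → α) (g : Finset (Fin 4) → Finset α) (c : Fin 2),
      Function.Injective f ∧ (∀ i, f i ∈ A) ∧
      (∀ S : Finset (Fin 4), #S = 2 → g S ⊆ A ∧ #(g S) = 3) ∧
      (∀ S T : Finset (Fin 4), #S = 2 → #T = 2 → g S = g T → S = T) ∧
      (∀ (i : Fin 4) (S : Finset (Fin 4)), #S = 2 → (f i ∈ g S ↔ i ∈ S)) ∧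
      (∀ (i : Fin 4) (S : Finset (Fin 4)), #S = 2 → i ∈ S → COL (f i) (g S) = c) := by
  set e := H.orderEmbOfFin hH
  have heH : ∀ j, e j ∈ H := H.orderEmbOfFin_mem hH
  have he : StrictMono e := e.strictMono
  refine ⟨leftVertex e, rightVertex e q.1, q.2, leftVertex_injective he,
    fun i => hHA (heH _), fun S hS => ⟨(rightVertex_subset heH _ S).trans hHA,
      card_rightVertex he _ hS⟩, fun S T _ _ h => rightVertex_injective he _ h,
    fun i S _ => leftVertex_mem_rightVertex_iff he, fun i S hS hi => ?_⟩
  exact colour_leftVertex_rightVertex he hS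
    (hq _ (rightVertex_subset heH _ S) (card_rightVertex he _ hS)) hi

end InducedRamseyB42

/-- Induced `B_{4,2}` Ramsey theorem: if `n` is large enough that every
6-coloring of the 3-subsets of `[n]` admits a homogeneous set of size 9, then
every 2-coloring of the edges of `B_{n,3}` contains an induced monochromatic
copy of `B_{4,2}`. -/
theorem stmt_4 (n : ℕ)
    (hR : ∀ col : Finset ℕ → Fin 6,
      ∃ H : Finset ℕ, H ⊆ Finset.Icc 1 n ∧ H.card = 9 ∧
        ∃ c0, ∀ X ⊆ H, X.card = 3 → col X = c0)
    (COL : ℕ → Finset ℕ → Fin 2) :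
    ∃ (f : Fin 4 → ℕ) (g : Finset (Fin 4) → Finset ℕ) (c : Fin 2),
      Function.Injective f ∧ (∀ i, f i ∈ Finset.Icc 1 n) ∧
      (∀ S : Finset (Fin 4), S.card = 2 →
        g S ⊆ Finset.Icc 1 n ∧ (g S).card = 3) ∧
      (∀ S T : Finset (Fin 4), S.card = 2 → T.card = 2 → g S = g T → S = T) ∧
      (∀ (i : Fin 4) (S : Finset (Fin 4)), S.card = 2 → (f i ∈ g S ↔ i ∈ S)) ∧
      (∀ (i : Fin 4) (S : Finset (Fin 4)), S.card = 2 → i ∈ S →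
        COL (f i) (g S) = c) := by
  obtain ⟨H, hHA, hH, c0, hc0⟩ := hR (InducedRamseyB42.patternColour COL)
  exact InducedRamseyB42.exists_induced_monochromatic_B42 COL hHA hH _
    fun X hXH hX => InducedRamseyB42.isPattern_of_patternColour_eq hX (hc0 X hXH hX)
end

section
/- Suppose COL is a 2-coloring of the edges of B_{n,3} with n ≥ 9, and suppose that for every 3-element subset X = {z₁ < z₂ < z₃} of [9], the edges (z₁, X) and (z₃, X) are both colored red. Then the left vertices {2,4,6,8} together with the right vertices {2,3,4}, {2,3,6}, {2,3,8}, {4,5,6}, {4,5,8}, {6,7,8} induce in B_{n,3} a subgraph isomorphic to B_{4,2}, all of whose edges are red. -/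
theorem color_eq_of_ne_middle {α : Type*} {COL : ℕ → Finset ℕ → α} {r : α} {a b c x : ℕ}
    (hred : COL a {a, b, c} = r ∧ COL c {a, b, c} = r) (hx : x ∈ ({a, b, c} : Finset ℕ))
    (hxb : x ≠ b) : COL x {a, b, c} = r := by
  simp only [Finset.mem_insert, Finset.mem_singleton] at hx
  rcases hx with rfl | rfl | rfl
  · exact hred.1
  · exact absurd rfl hxb
  · exact hred.2

theorem stmt_5_general (COL : ℕ → Finset ℕ → Fin 2)
    (hred : ∀ z₁ z₂ z₃ : ℕ, 1 ≤ z₁ → z₁ < z₂ → z₂ < z₃ → z₃ ≤ 9 →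
      COL z₁ ({z₁, z₂, z₃} : Finset ℕ) = 0 ∧ COL z₃ ({z₁, z₂, z₃} : Finset ℕ) = 0) :
    ∀ X ∈ ({{2,3,4},{2,3,6},{2,3,8},{4,5,6},{4,5,8},{6,7,8}} : Finset (Finset ℕ)),
      (X ∩ ({2,4,6,8} : Finset ℕ)).card = 2 ∧
      (∀ Y ∈ ({{2,3,4},{2,3,6},{2,3,8},{4,5,6},{4,5,8},{6,7,8}} : Finset (Finset ℕ)),
        X ∩ ({2,4,6,8} : Finset ℕ) = Y ∩ ({2,4,6,8} : Finset ℕ) → X = Y) ∧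
      (∀ x ∈ ({2,4,6,8} : Finset ℕ), x ∈ X → COL x X = 0) := by
  intro X hX
  fin_cases hX <;> refine ⟨by decide, by decide, fun x hx hxX => ?_⟩ <;>
    refine color_eq_of_ne_middle (hred _ _ _ (by norm_num) (by norm_num) (by norm_num)
      (by norm_num)) hxX ?_ <;>
    -- the middle elements 3, 5, 7 are not left vertices
    rintro rfl <;> simp at hx

/-- Case `(i,j) = (1,3)`: if for every 3-subset `{z₁ < z₂ < z₃}` of `[9]` the
edges `(z₁,X)` and `(z₃,X)` are red (color 0), then the left vertices
`{2,4,6,8}` together with the listed six 3-sets induce a red copy of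
`B_{4,2}`. -/
theorem stmt_5 (n : ℕ) (hn : 9 ≤ n) (COL : ℕ → Finset ℕ → Fin 2)
    (hred : ∀ z₁ z₂ z₃ : ℕ, 1 ≤ z₁ → z₁ < z₂ → z₂ < z₃ → z₃ ≤ 9 →
      COL z₁ ({z₁, z₂, z₃} : Finset ℕ) = 0 ∧ COL z₃ ({z₁, z₂, z₃} : Finset ℕ) = 0) :
    ∀ X ∈ ({{2,3,4},{2,3,6},{2,3,8},{4,5,6},{4,5,8},{6,7,8}} : Finset (Finset ℕ)),
      (X ∩ ({2,4,6,8} : Finset ℕ)).card = 2 ∧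
      (∀ Y ∈ ({{2,3,4},{2,3,6},{2,3,8},{4,5,6},{4,5,8},{6,7,8}} : Finset (Finset ℕ)),
        X ∩ ({2,4,6,8} : Finset ℕ) = Y ∩ ({2,4,6,8} : Finset ℕ) → X = Y) ∧
      (∀ x ∈ ({2,4,6,8} : Finset ℕ), x ∈ X → COL x X = 0) :=
  stmt_5_general COL hred
end

section
/- Let b ≤ a be positive integers, let s = ab + b − 1, and let n = R_{2b−1, 2·C(2b−1,b)}(s) be the corresponding hypergraph Ramsey number. Then for every 2-coloring of the edges of B_{n,2b−1}, there exists an induced monochromatic copy of B_{a,b}: a set of a left vertices and C(a,b) right vertices of B_{n,2b−1} inducing a subgraph isomorphic to B_{a,b} with all edges the same color. -/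
open Finset

/-! Color each `(2b-1)`-set `X` by a pattern `(ε, B)`: a color `ε` and a `b`-set `B` of positions
in `X` such that every edge from the `q`-th element of `X` to `X`, `q ∈ B`, has color `ε`; it
exists by pigeonhole. The Ramsey hypothesis gives a set `H` of size `ab + b - 1` on whose
`(2b-1)`-subsets the pattern is constant. The left vertices are the elements of `H` at positions
`b - 1, 2b - 1, …, ab - 1`. For a `b`-set `S` of indices, the right vertex `Y ⊆ H` is chosen so
that its elements at the positions in `B` are the left vertices indexed by `S` and its other
`b - 1` elements fill the gaps of width `b - 1` between left vertices. Then `Y` contains exactly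
the left vertices indexed by `S`, and all edges between them and `Y` have color `ε`. -/

lemma Nat.eq_and_eq_of_mul_add_eq_mul_add {b k k' r r' : ℕ} (hr : r < b) (hr' : r' < b)
    (h : b * k + r = b * k' + r') : k = k' ∧ r = r' := by
  have hb : 0 < b := by omega
  have hdiv := congrArg (· / b) h
  have hmod := congrArg (· % b) h
  simp only [Nat.mul_add_div hb, Nat.mul_add_mod, Nat.div_eq_of_lt hr, Nat.div_eq_of_lt hr',
    Nat.mod_eq_of_lt hr, Nat.mod_eq_of_lt hr', add_zero] at hdiv hmod
  exact ⟨hdiv, hmod⟩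

lemma strictMono_mul_add {α : Type*} [Preorder α] {b : ℕ} {κ ρ : α → ℕ}
    (hκ : Monotone κ) (hρ : ∀ x, ρ x < b) (hlex : ∀ ⦃x y⦄, x < y → κ x < κ y ∨ ρ x < ρ y) :
    StrictMono fun x => b * κ x + ρ x := by
  intro x y hxy
  rcases (hκ hxy.le).lt_or_eq with hlt | heq
  · calc b * κ x + ρ x < b * (κ x + 1) := by linarith [hρ x]
      _ ≤ b * κ y + ρ y := by nlinarith
  · have := (hlex hxy).resolve_left heq.not_lt
    simp only [heq]
    omega

section Rank

variable {α : Type*} [LinearOrder α] (s : Finset α)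

lemma monotone_card_filter_lt : Monotone fun q => #{p ∈ s | p < q} :=
  fun _ _ h => card_le_card (monotone_filter_right s fun _ _ hp => hp.trans_le h)

variable {s}

lemma card_filter_lt_lt_of_mem {q q' : α} (hq : q ∈ s) (hqq' : q < q') :
    #{p ∈ s | p < q} < #{p ∈ s | p < q'} := by
  refine card_lt_card ((ssubset_iff_of_subset ?_).2 ⟨q, ?_, ?_⟩)
  · exact monotone_filter_right s fun _ _ hp => hp.trans hqq'
  · simp [hq, hqq']
  · simp

lemma card_filter_lt_lt_card {q : α} (hq : q ∈ s) : #{p ∈ s | p < q} < #s :=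
  card_lt_card (filter_ssubset.2 ⟨q, hq, lt_irrefl q⟩)

lemma card_filter_lt_orderEmbOfFin {k : ℕ} (h : s.card = k) (i : Fin k) :
    #{p ∈ s | p < s.orderEmbOfFin h i} = i := by
  have : {p ∈ s | p < s.orderEmbOfFin h i} = (Iio i).map (s.orderEmbOfFin h).toEmbedding := by
    ext p
    constructor
    · intro hp
      obtain ⟨hps, hpi⟩ := mem_filter.1 hp
      obtain ⟨j, rfl⟩ : p ∈ Set.range (s.orderEmbOfFin h) := by
        rw [range_orderEmbOfFin]; exact hps
      exact mem_map_of_mem _ (mem_Iio.2 ((s.orderEmbOfFin h).lt_iff_lt.1 hpi))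
    · simp only [mem_map, mem_Iio, mem_filter]
      rintro ⟨j, hj, rfl⟩
      exact ⟨orderEmbOfFin_mem s h j, (s.orderEmbOfFin h).lt_iff_lt.2 hj⟩
  rw [this, card_map, Fin.card_Iio]

end Rank

lemma exists_card_eq_forall_eq_of_two_coloring {b : ℕ} (hb : 0 < b)
    (c : Fin (2 * b - 1) → Fin 2) : ∃ (ε : Fin 2) (B : Finset (Fin (2 * b - 1))),
      B.card = b ∧ ∀ q ∈ B, c q = ε := by
  obtain ⟨ε, hε⟩ := Fintype.exists_lt_card_fiber_of_mul_lt_card c (n := b - 1)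
    (by simp only [Fintype.card_fin]; omega)
  obtain ⟨B, hBsub, hB⟩ := exists_subset_card_eq (show b ≤ #{q | c q = ε} by omega)
  exact ⟨ε, B, hB, fun q hq => (mem_filter.1 (hBsub hq)).2⟩

lemma exists_homogeneous_pattern {α : Type*} [LinearOrder α] {U : Finset α} {s b : ℕ}
    (hb : 0 < b)
    (hR : ∀ col : Finset α → Fin (2 * Nat.choose (2 * b - 1) b),
      ∃ H : Finset α, H ⊆ U ∧ H.card = s ∧ ∃ c0, ∀ X ⊆ H, X.card = 2 * b - 1 → col X = c0)
    (COL : α → Finset α → Fin 2) :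
    ∃ H ⊆ U, H.card = s ∧ ∃ (ε : Fin 2) (B : Finset (Fin (2 * b - 1))), B.card = b ∧
      ∀ X ⊆ H, ∀ hX : X.card = 2 * b - 1, ∀ q ∈ B, COL (X.orderEmbOfFin hX q) X = ε := by
  let enc := Fintype.equivFinOfCardEq
    (show Fintype.card (Fin 2 × {B : Finset (Fin (2 * b - 1)) // B.card = b}) =
      2 * Nat.choose (2 * b - 1) b by simp)
  have hpattern : ∀ X : Finset α, ∃ p : Fin 2 × {B : Finset (Fin (2 * b - 1)) // B.card = b},
      ∀ hX : X.card = 2 * b - 1, ∀ q ∈ p.2.1, COL (X.orderEmbOfFin hX q) X = p.1 := by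
    intro X
    by_cases hX : X.card = 2 * b - 1
    · obtain ⟨ε, B, hB, hmono⟩ :=
        exists_card_eq_forall_eq_of_two_coloring hb fun q => COL (X.orderEmbOfFin hX q) X
      exact ⟨(ε, ⟨B, hB⟩), fun _ => hmono⟩
    · exact ⟨enc.symm ⟨0, by have := Nat.choose_pos (show b ≤ 2 * b - 1 by omega); omega⟩,
        fun h => absurd h hX⟩
  choose p hp using hpattern
  obtain ⟨H, hHU, hH, c0, hc0⟩ := hR (enc ∘ p)
  refine ⟨H, hHU, hH, (enc.symm c0).1, (enc.symm c0).2.1, (enc.symm c0).2.2,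
    fun X hXH hX => ?_⟩
  rw [← hc0 X hXH hX, Function.comp_apply, Equiv.symm_apply_apply]
  exact hp X hX

section BlockPosition

variable {a b : ℕ} {S : Finset (Fin a)} (hS : S.card = b)

def enumOrTop (u : ℕ) : ℕ := if h : u < b then S.orderEmbOfFin hS ⟨u, h⟩ else a

lemma enumOrTop_le (u : ℕ) : enumOrTop hS u ≤ a := by
  unfold enumOrTop
  split_ifs
  exacts [(S.orderEmbOfFin hS _).isLt.le, le_rfl]

lemma enumOrTop_lt {u : ℕ} (hu : u < b) : enumOrTop hS u < a := by
  simp only [enumOrTop, dif_pos hu, Fin.is_lt]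

lemma strictMonoOn_enumOrTop : StrictMonoOn (enumOrTop hS) (Set.Iic b) := by
  intro u _ v hv huv
  have hu : u < b := huv.trans_le hv
  rcases (Set.mem_Iic.1 hv).lt_or_eq with hvb | rfl
  · simp only [enumOrTop, dif_pos hu, dif_pos hvb]
    exact (S.orderEmbOfFin hS).strictMono (Fin.mk_lt_mk.2 huv)
  · simpa only [enumOrTop, dif_neg (lt_irrefl v)] using enumOrTop_lt hS hu

lemma enumOrTop_orderEmbOfFin (u : Fin b) : enumOrTop hS u = S.orderEmbOfFin hS u := by
  simp only [enumOrTop, dif_pos u.isLt, Fin.eta]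

variable (B : Finset (Fin (2 * b - 1)))

/-- Positions `b * i + (b - 1)` are reserved for the left vertices. The `u`-th element of `B`
goes to the reserved position of the `u`-th element of `S`; any other `q` goes to the block of
the next element of `B` (block `a` if there is none), at an offset below `b - 1` given by its
rank in `Bᶜ`. -/
def blockPosition (q : Fin (2 * b - 1)) : ℕ :=
  b * enumOrTop hS #{p ∈ B | p < q} + if q ∈ B then b - 1 else #{p ∈ Bᶜ | p < q}

variable {B}

lemma card_compl_filter_lt_lt (hB : B.card = b) {q : Fin (2 * b - 1)} (hq : q ∉ B) :
    #{p ∈ Bᶜ | p < q} < b - 1 := by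
  have := card_filter_lt_lt_card (mem_compl.2 hq)
  rw [card_compl, Fintype.card_fin, hB] at this
  omega

lemma strictMono_blockPosition (hB : B.card = b) : StrictMono (blockPosition hS B) := by
  have hrank (q : Fin (2 * b - 1)) : #{p ∈ B | p < q} ∈ Set.Iic b :=
    (card_filter_le _ _).trans hB.le
  apply strictMono_mul_add
  · exact fun q q' h =>
      (strictMonoOn_enumOrTop hS).monotoneOn (hrank q) (hrank q') (monotone_card_filter_lt B h)
  · intro q
    have := q.pos
    split_ifs with hq
    · omega
    · have := card_compl_filter_lt_lt hB hq; omega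
  · intro q q' hqq'
    rcases (monotone_card_filter_lt B hqq'.le).lt_or_eq with hlt | heq
    · exact Or.inl (strictMonoOn_enumOrTop hS (hrank q) (hrank q') hlt)
    · have hq : q ∉ B := fun hq => (card_filter_lt_lt_of_mem hq hqq').ne heq
      right
      rw [if_neg hq]
      split_ifs with hq'
      · exact card_compl_filter_lt_lt hB hq
      · exact card_filter_lt_lt_of_mem (mem_compl.2 hq) hqq'

lemma blockPosition_lt (hB : B.card = b) (q : Fin (2 * b - 1)) :
    blockPosition hS B q < a * b + b - 1 := by
  unfold blockPosition
  split_ifs with hq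
  · have := enumOrTop_lt hS ((card_filter_lt_lt_card hq).trans_eq hB)
    have := q.pos
    have : b * enumOrTop hS #{p ∈ B | p < q} + b ≤ a * b := by nlinarith
    omega
  · have : b * enumOrTop hS #{p ∈ B | p < q} ≤ a * b := by
      nlinarith [enumOrTop_le hS #{p ∈ B | p < q}]
    have := card_compl_filter_lt_lt hB hq
    omega

lemma mem_and_mem_of_blockPosition_eq (hB : B.card = b) {q : Fin (2 * b - 1)} {i : Fin a}
    (h : blockPosition hS B q = b * i + (b - 1)) : q ∈ B ∧ i ∈ S := by
  have hb := q.pos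
  by_cases hq : q ∈ B
  · refine ⟨hq, ?_⟩
    rw [blockPosition, if_pos hq] at h
    have hu := (card_filter_lt_lt_card hq).trans_eq hB
    have := (Nat.eq_and_eq_of_mul_add_eq_mul_add (by omega) (by omega) h).1
    rw [show i = S.orderEmbOfFin hS ⟨_, hu⟩ from
      Fin.ext (by rw [← this, enumOrTop, dif_pos hu])]
    exact orderEmbOfFin_mem S hS _
  · rw [blockPosition, if_neg hq] at h
    have := card_compl_filter_lt_lt hB hq
    have := (Nat.eq_and_eq_of_mul_add_eq_mul_add (by omega) (by omega) h).2
    omega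

lemma exists_blockPosition_eq (hB : B.card = b) {i : Fin a} (hi : i ∈ S) :
    ∃ q, blockPosition hS B q = b * i + (b - 1) := by
  obtain ⟨u, rfl⟩ : i ∈ Set.range (S.orderEmbOfFin hS) := by
    rw [range_orderEmbOfFin]; exact hi
  refine ⟨B.orderEmbOfFin hB u, ?_⟩
  rw [blockPosition, if_pos (orderEmbOfFin_mem B hB u), card_filter_lt_orderEmbOfFin,
    enumOrTop_orderEmbOfFin]

end BlockPosition

section InducedCopy

variable {a b : ℕ} (hb : 0 < b)

def slot (i : Fin a) : Fin (a * b + b - 1) :=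
  ⟨b * i + (b - 1), by
    have : b * i + b ≤ a * b := by nlinarith [i.isLt]
    omega⟩

lemma slot_injective : Function.Injective (slot (a := a) hb) := fun i j h =>
  Fin.ext (Nat.eq_of_mul_eq_mul_left hb (by simpa [slot] using h))

variable {α : Type*} [LinearOrder α] {H : Finset α} (hH : H.card = a * b + b - 1)

lemma exists_induced_right_vertex {B : Finset (Fin (2 * b - 1))} (hB : B.card = b) {S : Finset (Fin a)}
    (hS : S.card = b) :
    ∃ Y ⊆ H, ∃ hY : Y.card = 2 * b - 1,
      (∀ i, H.orderEmbOfFin hH (slot hb i) ∈ Y ↔ i ∈ S) ∧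
      ∀ i ∈ S, ∃ q ∈ B, Y.orderEmbOfFin hY q = H.orderEmbOfFin hH (slot hb i) := by
  set e := H.orderEmbOfFin hH
  let φ : Fin (2 * b - 1) → Fin (a * b + b - 1) :=
    fun q => ⟨blockPosition hS B q, blockPosition_lt hS hB q⟩
  have hφ : StrictMono (e ∘ φ) := e.strictMono.comp (strictMono_blockPosition hS hB)
  have hφslot (q : Fin (2 * b - 1)) (i : Fin a) :
      e (φ q) = e (slot hb i) ↔ blockPosition hS B q = b * i + (b - 1) := by
    simp [e.eq_iff_eq, φ, slot, Fin.ext_iff]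
  have hY : (univ.image (e ∘ φ)).card = 2 * b - 1 := by
    rw [card_image_of_injective _ hφ.injective, card_univ, Fintype.card_fin]
  refine ⟨univ.image (e ∘ φ), image_subset_iff.2 fun q _ => orderEmbOfFin_mem H hH _, hY,
    fun i => ?_, fun i hi => ?_⟩
  · simp only [mem_image, mem_univ, true_and, Function.comp_apply, hφslot]
    exact ⟨fun ⟨q, hq⟩ => (mem_and_mem_of_blockPosition_eq hS hB hq).2,
      exists_blockPosition_eq hS hB⟩
  · obtain ⟨q, hq⟩ := exists_blockPosition_eq hS hB hi
    refine ⟨q, (mem_and_mem_of_blockPosition_eq hS hB hq).1, ?_⟩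
    rw [← orderEmbOfFin_unique hY (fun q => mem_image_of_mem _ (mem_univ q)) hφ]
    exact (hφslot q i).2 hq

end InducedCopy

theorem stmt_6_general (a b n : ℕ) (hb : 0 < b)
    (hR : ∀ col : Finset ℕ → Fin (2 * Nat.choose (2 * b - 1) b),
      ∃ H : Finset ℕ, H ⊆ Finset.Icc 1 n ∧ H.card = a * b + b - 1 ∧
        ∃ c0, ∀ X ⊆ H, X.card = 2 * b - 1 → col X = c0)
    (COL : ℕ → Finset ℕ → Fin 2) :
    ∃ (f : Fin a → ℕ) (g : Finset (Fin a) → Finset ℕ) (c : Fin 2),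
      Function.Injective f ∧ (∀ i, f i ∈ Finset.Icc 1 n) ∧
      (∀ S : Finset (Fin a), S.card = b →
        g S ⊆ Finset.Icc 1 n ∧ (g S).card = 2 * b - 1) ∧
      (∀ S T : Finset (Fin a), S.card = b → T.card = b → g S = g T → S = T) ∧
      (∀ (i : Fin a) (S : Finset (Fin a)), S.card = b → (f i ∈ g S ↔ i ∈ S)) ∧
      (∀ (i : Fin a) (S : Finset (Fin a)), S.card = b → i ∈ S →
        COL (f i) (g S) = c) := by
  obtain ⟨H, hHn, hH, ε, B, hB, hmono⟩ := exists_homogeneous_pattern hb hR COL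
  let f i := H.orderEmbOfFin hH (slot hb i)
  have hedge (S : Finset (Fin a)) : ∃ Y, S.card = b → Y ⊆ H ∧ ∃ hY : Y.card = 2 * b - 1,
      (∀ i, f i ∈ Y ↔ i ∈ S) ∧ ∀ i ∈ S, ∃ q ∈ B, Y.orderEmbOfFin hY q = f i := by
    by_cases hS : S.card = b
    · obtain ⟨Y, hYH, hY⟩ := exists_induced_right_vertex hb hH hB hS
      exact ⟨Y, fun _ => ⟨hYH, hY⟩⟩
    · exact ⟨∅, fun h => absurd h hS⟩
  choose g hg using hedge
  refine ⟨f, g, ε, (H.orderEmbOfFin hH).injective.comp (slot_injective hb),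
    fun i => hHn (orderEmbOfFin_mem H hH _),
    fun S hS => ⟨(hg S hS).1.trans hHn, (hg S hS).2.1⟩, fun S T hS hT hST => ?_,
    fun i S hS => (hg S hS).2.2.1 i, fun i S hS hi => ?_⟩
  · ext i
    rw [← (hg S hS).2.2.1, ← (hg T hT).2.2.1, hST]
  · obtain ⟨hYH, hY, -, hpos⟩ := hg S hS
    obtain ⟨q, hq, hqi⟩ := hpos i hi
    rw [← hqi]
    exact hmono _ hYH hY q hq

/-- Induced `B_{a,b}` Ramsey theorem: with `s = ab + b - 1` and `n` large
enough that every `2·C(2b-1,b)`-coloring of the `(2b-1)`-subsets of `[n]`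
admits a homogeneous set of size `s`, every 2-coloring of the edges of
`B_{n,2b-1}` contains an induced monochromatic copy of `B_{a,b}`. -/
theorem stmt_6 (a b n : ℕ) (hb : 0 < b) (hba : b ≤ a)
    (hR : ∀ col : Finset ℕ → Fin (2 * Nat.choose (2 * b - 1) b),
      ∃ H : Finset ℕ, H ⊆ Finset.Icc 1 n ∧ H.card = a * b + b - 1 ∧
        ∃ c0, ∀ X ⊆ H, X.card = 2 * b - 1 → col X = c0)
    (COL : ℕ → Finset ℕ → Fin 2) :
    ∃ (f : Fin a → ℕ) (g : Finset (Fin a) → Finset ℕ) (c : Fin 2),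
      Function.Injective f ∧ (∀ i, f i ∈ Finset.Icc 1 n) ∧
      (∀ S : Finset (Fin a), S.card = b →
        g S ⊆ Finset.Icc 1 n ∧ (g S).card = 2 * b - 1) ∧
      (∀ S T : Finset (Fin a), S.card = b → T.card = b → g S = g T → S = T) ∧
      (∀ (i : Fin a) (S : Finset (Fin a)), S.card = b → (f i ∈ g S ↔ i ∈ S)) ∧
      (∀ (i : Fin a) (S : Finset (Fin a)), S.card = b → i ∈ S →
        COL (f i) (g S) = c) :=
  stmt_6_general a b n hb hR COL
end

section
/- Let H = {1, 2, ..., ab + b − 1} and let I = {i₁ < ... < i_b} ⊆ [2b−1] be a set of b indices. Suppose COL is a 2-coloring of the edges of B_{n, 2b−1} (with n ≥ ab + b − 1) such that for every (2b−1)-subset X = {z₁ < ... < z_{2b−1}} of H, the edges (z_{i}, X) for i ∈ I are all red. Then the left vertices L = {b, 2b, 3b, ..., ab}, together with suitably chosen right vertices (one (2b−1)-subset of H for each b-subset of L, containing exactly that b-subset among the elements of L and having its elements of L occupy the index positions I), induce a red monochromatic copy of B_{a,b} in B_{n,2b−1}. -/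
/-!
Enumerate `S` increasingly on the positions `I`, and give every other position `p` the value at
its anchor `i` (the first position of `I` at or after `p`, or the last one of `I` if there is
none) shifted by `p - i`. A position and its anchor enclose no other element of `I`, and `I` fills
`b` of the `2b - 1` positions, so they are less than `b` apart: the shifted values are not
multiples of `b`, lie in `[1, ab + b - 1]`, and, since distinct elements of `S` differ by at least
`b`, the enumeration is increasing. Its image `X_S` meets `L` exactly in `S`, so `S ↦ X_S` is
injective.
-/
open Finset

namespace Finset

variable {α β : Type*} [LinearOrder α] [LinearOrder β]

theorem coe_orderIsoOfFin_eq_of_strictMono {s : Finset α} {k : ℕ} (h : #s = k) {f : Fin k → α}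
    (hfs : ∀ i, f i ∈ s) (hf : StrictMono f) (i : Fin k) :
    (s.orderIsoOfFin h i : α) = f i := by
  rw [coe_orderIsoOfFin_apply, ← orderEmbOfFin_unique h hfs hf]

theorem exists_strictMonoOn_image_eq [Inhabited β] {I : Finset α} {S : Finset β} (h : #I = #S) :
    ∃ τ : α → β, StrictMonoOn τ I ∧ I.image τ = S := by
  classical
  let e : I ≃o S := (I.orderIsoOfFin h).symm.trans (S.orderIsoOfFin rfl)
  refine ⟨fun x => if hx : x ∈ I then e ⟨x, hx⟩ else default, fun x hx y hy hxy => ?_, ?_⟩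
  · simp only [dif_pos (mem_coe.1 hx), dif_pos (mem_coe.1 hy), Subtype.coe_lt_coe]
    exact e.strictMono (Subtype.mk_lt_mk.2 hxy)
  · ext y
    simp only [mem_image]
    constructor
    · rintro ⟨x, hx, rfl⟩
      simp only [dif_pos hx, coe_mem]
    · intro hy
      refine ⟨e.symm ⟨y, hy⟩, coe_mem _, ?_⟩
      simp

theorem card_add_card_le_of_disjoint {γ : Type*} [Fintype γ] [DecidableEq γ] {s t : Finset γ}
    (h : Disjoint s t) : #s + #t ≤ Fintype.card γ := by
  simpa [card_union_of_disjoint h] using card_le_univ (s ∪ t)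

end Finset

section Anchor

variable {m : ℕ} (I : Finset (Fin m)) (hI : I.Nonempty)

def anchor (p : Fin m) : Fin m :=
  if h : (I.filter (p ≤ ·)).Nonempty then (I.filter (p ≤ ·)).min' h else I.max' hI

variable {I} {p q i : Fin m}

theorem anchor_mem (p : Fin m) : anchor I hI p ∈ I := by
  unfold anchor
  split_ifs with h
  · exact mem_of_mem_filter _ (min'_mem _ h)
  · exact max'_mem _ _

theorem lt_of_lt_anchor (hi : i ∈ I) (h : i < anchor I hI p) : i < p := by
  unfold anchor at h
  split_ifs at h with hne
  · by_contra! hpi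
    exact (min'_le _ _ (mem_filter.2 ⟨hi, hpi⟩)).not_gt h
  · by_contra! hpi
    exact hne ⟨i, mem_filter.2 ⟨hi, hpi⟩⟩

theorem le_anchor_of_anchor_lt (h : anchor I hI p < p) (hi : i ∈ I) : i ≤ anchor I hI p := by
  unfold anchor at h ⊢
  split_ifs at h ⊢ with hne
  · exact absurd (mem_filter.1 (min'_mem _ hne)).2 h.not_ge
  · exact le_max' _ _ hi

theorem anchor_eq_self (hp : p ∈ I) : anchor I hI p = p := by
  rcases lt_trichotomy p (anchor I hI p) with h | h | h
  · exact absurd (lt_of_lt_anchor hI hp h) (lt_irrefl p)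
  · exact h.symm
  · exact absurd (le_anchor_of_anchor_lt hI h hp) h.not_ge

theorem anchor_mono : Monotone (anchor I hI) := by
  intro p q hpq
  by_contra! h
  have hq : anchor I hI q < q := (lt_of_lt_anchor hI (anchor_mem hI _) h).trans_le hpq
  exact (le_anchor_of_anchor_lt hI hq (anchor_mem hI _)).not_gt h

theorem le_anchor_of_anchor_lt_anchor (h : anchor I hI p < anchor I hI q) :
    p ≤ anchor I hI p := by
  by_contra! hp
  exact (le_anchor_of_anchor_lt hI hp (anchor_mem hI _)).not_gt h

theorem anchor_le_add (p : Fin m) : (anchor I hI p : ℕ) ≤ p + (m - #I) := by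
  have : Disjoint (Ico p (anchor I hI p)) I := disjoint_left.2 fun i hi hiI =>
    (mem_Ico.1 hi).1.not_gt (lt_of_lt_anchor hI hiI (mem_Ico.1 hi).2)
  have := card_add_card_le_of_disjoint this
  rw [Fin.card_Ico, Fintype.card_fin] at this
  omega

theorem le_anchor_add (p : Fin m) : (p : ℕ) ≤ anchor I hI p + (m - #I) := by
  rcases le_or_gt p (anchor I hI p) with h | h
  · have : (p : ℕ) ≤ anchor I hI p := h
    omega
  have : Disjoint (Ioc (anchor I hI p) p) I := disjoint_left.2 fun i hi hiI =>
    (mem_Ioc.1 hi).1.not_ge (le_anchor_of_anchor_lt hI h hiI)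
  have := card_add_card_le_of_disjoint this
  rw [Fin.card_Ioc, Fintype.card_fin] at this
  omega

end Anchor

section Extend

variable {m : ℕ} (I : Finset (Fin m)) (hI : I.Nonempty) (τ : Fin m → ℕ)

def extendByAnchor (p : Fin m) : ℕ := τ (anchor I hI p) + p - anchor I hI p

variable {I τ} {d : ℕ} {p : Fin m}

theorem extendByAnchor_of_mem (hp : p ∈ I) : extendByAnchor I hI τ p = τ p := by
  simp [extendByAnchor, anchor_eq_self hI hp]

variable (hgap : m - #I < d) (hτ : ∀ i ∈ I, d ∣ τ i ∧ 0 < τ i)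
include hgap hτ

omit hgap in
theorem le_apply_anchor (p : Fin m) : d ≤ τ (anchor I hI p) :=
  Nat.le_of_dvd (hτ _ (anchor_mem hI p)).2 (hτ _ (anchor_mem hI p)).1

theorem natCast_extendByAnchor (p : Fin m) :
    (extendByAnchor I hI τ p : ℤ) = τ (anchor I hI p) + p - anchor I hI p := by
  have := le_apply_anchor hI hτ p
  have := anchor_le_add hI p
  rw [extendByAnchor, Nat.cast_sub (by omega)]
  push_cast
  ring

theorem pos_extendByAnchor (p : Fin m) : 0 < extendByAnchor I hI τ p := by
  have := le_apply_anchor hI hτ p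
  have := anchor_le_add hI p
  rw [extendByAnchor]
  omega

omit hτ hgap in
theorem extendByAnchor_le (p : Fin m) :
    extendByAnchor I hI τ p ≤ τ (anchor I hI p) + (m - #I) := by
  have := le_anchor_add hI p
  rw [extendByAnchor]
  omega

theorem mem_of_dvd_extendByAnchor (h : d ∣ extendByAnchor I hI τ p) : p ∈ I := by
  have hA := anchor_le_add hI p
  have hA' := le_anchor_add hI p
  have : ((p : ℤ) - anchor I hI p) = 0 := by
    refine Int.eq_zero_of_abs_lt_dvd (m := d) ?_ (abs_sub_lt_iff.2 ⟨by omega, by omega⟩)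
    have := (Int.natCast_dvd_natCast.2 h).sub
      (Int.natCast_dvd_natCast.2 (hτ _ (anchor_mem hI p)).1)
    rwa [natCast_extendByAnchor hI hgap hτ, add_sub_assoc, add_sub_cancel_left] at this
  rw [Fin.ext (by omega : (p : ℕ) = anchor I hI p)]
  exact anchor_mem hI _

theorem strictMono_extendByAnchor (hmono : StrictMonoOn τ I) :
    StrictMono (extendByAnchor I hI τ) := by
  intro p q hpq
  rcases (anchor_mono hI hpq.le).eq_or_lt with h | h
  · have := le_apply_anchor hI hτ p
    have := anchor_le_add hI p
    have : (p : ℕ) < q := hpq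
    rw [extendByAnchor, extendByAnchor, ← h]
    omega
  · -- distinct values of `τ` on `I` differ by at least `d`, more than any shift
    have hτd : τ (anchor I hI p) + d ≤ τ (anchor I hI q) := by
      have hlt := hmono (anchor_mem hI p) (anchor_mem hI q) h
      have := Nat.le_of_dvd (by omega)
        (Nat.dvd_sub (hτ _ (anchor_mem hI q)).1 (hτ _ (anchor_mem hI p)).1)
      omega
    have hp : (p : ℕ) ≤ anchor I hI p := le_anchor_of_anchor_lt_anchor hI h
    have := anchor_le_add hI q
    rw [extendByAnchor, extendByAnchor]
    omega

theorem extendByAnchor_mem_image_iff : extendByAnchor I hI τ p ∈ I.image τ ↔ p ∈ I := by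
  refine ⟨fun h => ?_, fun hp => extendByAnchor_of_mem hI hp ▸ mem_image_of_mem τ hp⟩
  obtain ⟨i, hi, hip⟩ := mem_image.1 h
  exact mem_of_dvd_extendByAnchor hI hgap hτ (hip ▸ (hτ i hi).1)

end Extend

section PositionedSet

variable {m : ℕ} (I : Finset (Fin m)) (hI : I.Nonempty)

/-- The right vertex `X_S`. -/
noncomputable def positionedSet (S : Finset ℕ) : Finset ℕ :=
  if h : #I = #S then univ.image (extendByAnchor I hI (exists_strictMonoOn_image_eq h).choose)
  else ∅

variable {I} {d : ℕ} {S : Finset ℕ}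

theorem exists_positionedSet_eq (hIS : #I = #S) : ∃ τ : Fin m → ℕ, StrictMonoOn τ I ∧
    I.image τ = S ∧ positionedSet I hI S = univ.image (extendByAnchor I hI τ) :=
  ⟨_, (exists_strictMonoOn_image_eq hIS).choose_spec.1,
    (exists_strictMonoOn_image_eq hIS).choose_spec.2, dif_pos hIS⟩

variable (hIS : #I = #S) (hgap : m - #I < d) (hS : ∀ x ∈ S, d ∣ x ∧ 0 < x)
include hIS hgap hS

theorem card_positionedSet : #(positionedSet I hI S) = m := by
  obtain ⟨τ, hmono, rfl, hX⟩ := exists_positionedSet_eq hI hIS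
  have hτ : ∀ i ∈ I, d ∣ τ i ∧ 0 < τ i := fun i hi => hS _ (mem_image_of_mem τ hi)
  rw [hX, card_image_of_injective _ (strictMono_extendByAnchor hI hgap hτ hmono).injective,
    card_univ, Fintype.card_fin]

theorem orderIsoOfFin_positionedSet_mem_iff (h : #(positionedSet I hI S) = m) (i : Fin m) :
    ((positionedSet I hI S).orderIsoOfFin h i : ℕ) ∈ S ↔ i ∈ I := by
  obtain ⟨τ, hmono, rfl, hX⟩ := exists_positionedSet_eq hI hIS
  have hτ : ∀ i ∈ I, d ∣ τ i ∧ 0 < τ i := fun i hi => hS _ (mem_image_of_mem τ hi)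
  rw [coe_orderIsoOfFin_eq_of_strictMono h (fun p => hX ▸ mem_image_of_mem _ (mem_univ p))
    (strictMono_extendByAnchor hI hgap hτ hmono)]
  exact extendByAnchor_mem_image_iff hI hgap hτ

theorem positionedSet_inter {L : Finset ℕ} (hSL : S ⊆ L) (hL : ∀ x ∈ L, d ∣ x) :
    positionedSet I hI S ∩ L = S := by
  obtain ⟨τ, -, rfl, hX⟩ := exists_positionedSet_eq hI hIS
  have hτ : ∀ i ∈ I, d ∣ τ i ∧ 0 < τ i := fun i hi => hS _ (mem_image_of_mem τ hi)
  ext x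
  simp only [hX, mem_inter, mem_image, mem_univ, true_and]
  constructor
  · rintro ⟨⟨p, rfl⟩, hx⟩
    have hp := mem_of_dvd_extendByAnchor hI hgap hτ (hL _ hx)
    exact ⟨p, hp, (extendByAnchor_of_mem hI hp).symm⟩
  · rintro ⟨i, hi, rfl⟩
    exact ⟨⟨i, extendByAnchor_of_mem hI hi⟩, hSL (mem_image_of_mem τ hi)⟩

theorem positionedSet_subset_Icc {M : ℕ} (hM : ∀ x ∈ S, x ≤ M) :
    positionedSet I hI S ⊆ Icc 1 (M + (m - #I)) := by
  obtain ⟨τ, -, rfl, hX⟩ := exists_positionedSet_eq hI hIS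
  have hτ : ∀ i ∈ I, d ∣ τ i ∧ 0 < τ i := fun i hi => hS _ (mem_image_of_mem τ hi)
  intro x hx
  obtain ⟨p, -, rfl⟩ := mem_image.1 (hX ▸ hx)
  have := extendByAnchor_le hI p (τ := τ)
  have := hM _ (mem_image_of_mem τ (anchor_mem hI p))
  exact mem_Icc.2 ⟨pos_extendByAnchor hI hgap hτ p, by omega⟩

end PositionedSet

theorem stmt_8_general (a b : ℕ) (hb : 0 < b)
    (I : Finset (Fin (2 * b - 1))) (hI : I.card = b)
    (COL : ℕ → Finset ℕ → Fin 2)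
    (hred : ∀ (X : Finset ℕ) (hX : X.card = 2 * b - 1),
      X ⊆ Finset.Icc 1 (a * b + b - 1) →
      ∀ i ∈ I, COL ((X.orderIsoOfFin hX i : ℕ)) X = 0) :
    ((Finset.Icc 1 a).image (· * b)).card = a ∧
    ∃ g : Finset ℕ → Finset ℕ,
      (∀ S ⊆ (Finset.Icc 1 a).image (· * b), S.card = b →
        ∃ h : (g S).card = 2 * b - 1,
          g S ⊆ Finset.Icc 1 (a * b + b - 1) ∧
          g S ∩ (Finset.Icc 1 a).image (· * b) = S ∧
          (∀ i : Fin (2 * b - 1), ((g S).orderIsoOfFin h i : ℕ) ∈ S ↔ i ∈ I) ∧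
          (∀ x ∈ S, COL x (g S) = 0)) ∧
      (∀ S T, S ⊆ (Finset.Icc 1 a).image (· * b) →
        T ⊆ (Finset.Icc 1 a).image (· * b) →
        S.card = b → T.card = b → g S = g T → S = T) := by
  set L := (Icc 1 a).image (· * b)
  have hL : ∀ x ∈ L, (b ∣ x ∧ 0 < x) ∧ x ≤ a * b := by
    simp only [L, mem_image, mem_Icc]
    rintro _ ⟨c, hc, rfl⟩
    exact ⟨⟨dvd_mul_left b c, Nat.mul_pos hc.1 hb⟩, Nat.mul_le_mul_right b hc.2⟩
  have hIne : I.Nonempty := card_pos.1 (by omega)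
  have hgap : 2 * b - 1 - #I < b := by omega
  have hinter : ∀ S ⊆ L, #S = b → positionedSet I hIne S ∩ L = S := fun S hSL hSb =>
    positionedSet_inter hIne (hI.trans hSb.symm) hgap (fun x hx => (hL x (hSL hx)).1) hSL
      fun x hx => (hL x hx).1.1
  refine ⟨by simp [L, card_image_of_injective _ (mul_left_injective₀ hb.ne')],
    positionedSet I hIne, fun S hSL hSb => ?_,
    fun S T hSL hTL hSb hTb hST => by rw [← hinter S hSL hSb, ← hinter T hTL hTb, hST]⟩
  have hIS : #I = #S := hI.trans hSb.symm
  have hS : ∀ x ∈ S, b ∣ x ∧ 0 < x := fun x hx => (hL x (hSL hx)).1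
  have hcard := card_positionedSet hIne hIS hgap hS
  have hsub : positionedSet I hIne S ⊆ Icc 1 (a * b + b - 1) :=
    (positionedSet_subset_Icc hIne hIS hgap hS fun x hx => (hL x (hSL hx)).2).trans
      (Icc_subset_Icc le_rfl (by omega))
  have hiff := orderIsoOfFin_positionedSet_mem_iff hIne hIS hgap hS hcard
  refine ⟨hcard, hsub, hinter S hSL hSb, hiff, fun x hx => ?_⟩
  obtain ⟨i, hi⟩ := ((positionedSet I hIne S).orderIsoOfFin hcard).surjective
    ⟨x, (mem_inter.1 ((hinter S hSL hSb).symm ▸ hx)).1⟩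
  simpa [hi] using hred _ hcard hsub i ((hiff i).1 (by simpa [hi] using hx))

/-- If every `(2b-1)`-subset `X` of `H = [ab+b-1]` has its edges at the index
positions `I` colored red, then the left vertices `L = {b, 2b, …, ab}` together
with suitably chosen right vertices induce a red monochromatic copy of
`B_{a,b}` in `B_{n,2b-1}`. -/
theorem stmt_8 (a b n : ℕ) (hb : 0 < b) (hba : b ≤ a) (hn : a * b + b - 1 ≤ n)
    (I : Finset (Fin (2 * b - 1))) (hI : I.card = b)
    (COL : ℕ → Finset ℕ → Fin 2)
    (hred : ∀ (X : Finset ℕ) (hX : X.card = 2 * b - 1),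
      X ⊆ Finset.Icc 1 (a * b + b - 1) →
      ∀ i ∈ I, COL ((X.orderIsoOfFin hX i : ℕ)) X = 0) :
    ((Finset.Icc 1 a).image (· * b)).card = a ∧
    ∃ g : Finset ℕ → Finset ℕ,
      (∀ S ⊆ (Finset.Icc 1 a).image (· * b), S.card = b →
        ∃ h : (g S).card = 2 * b - 1,
          g S ⊆ Finset.Icc 1 (a * b + b - 1) ∧
          g S ∩ (Finset.Icc 1 a).image (· * b) = S ∧
          (∀ i : Fin (2 * b - 1), ((g S).orderIsoOfFin h i : ℕ) ∈ S ↔ i ∈ I) ∧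
          (∀ x ∈ S, COL x (g S) = 0)) ∧
      (∀ S T, S ⊆ (Finset.Icc 1 a).image (· * b) →
        T ⊆ (Finset.Icc 1 a).image (· * b) →
        S.card = b → T.card = b → g S = g T → S = T) :=
  stmt_8_general a b hb I hI COL hred
end

section
/- Every bipartite graph G with c left vertices and d right vertices is an induced subgraph of B_{a,b} where a = 2c + d and b = c + 1. That is, there exist an injection f from the left vertices of G into [a] and an injection g from the right vertices of G into the b-subsets of [a], such that for every left vertex u and right vertex v of G: u is adjacent to v in G if and only if f(u) ∈ g(v). -/
/-!
Encode the left vertices of `G` as one copy of `C` inside `C ⊕ C ⊕ D`. A right vertex `v`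
becomes the set consisting of its neighbourhood in the first copy of `C`, the complement of
that neighbourhood in the second copy, and `v` itself in `D`. The two copies of `C` together
contribute exactly `|C|` elements, so every such set has size `|C| + 1`, and the tag `v`
makes the sets pairwise distinct.
-/

open Finset

namespace InducedSubgraph

variable {α β : Type*} [Fintype α] [DecidableEq α] (Adj : α → β → Prop) [DecidableRel Adj]

def neighbors (v : β) : Finset α := univ.filter (Adj · v)

def paddedNeighbors (v : β) : Finset (α ⊕ α ⊕ β) :=
  (neighbors Adj v).disjSum ((neighbors Adj v)ᶜ.disjSum {v})

theorem card_paddedNeighbors (v : β) : #(paddedNeighbors Adj v) = Fintype.card α + 1 := by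
  simp only [paddedNeighbors, card_disjSum, card_singleton, ← add_assoc, card_add_card_compl]

theorem inl_mem_paddedNeighbors (u : α) (v : β) :
    Sum.inl u ∈ paddedNeighbors Adj v ↔ Adj u v := by
  simp [paddedNeighbors, neighbors]

theorem inr_inr_mem_paddedNeighbors (w v : β) :
    Sum.inr (Sum.inr w) ∈ paddedNeighbors Adj v ↔ w = v := by
  simp [paddedNeighbors]

theorem paddedNeighbors_injective : Function.Injective (paddedNeighbors Adj) := fun v w h =>
  (inr_inr_mem_paddedNeighbors Adj v w).1 (h ▸ (inr_inr_mem_paddedNeighbors Adj v v).2 rfl)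

end InducedSubgraph

open InducedSubgraph in
/-- Every bipartite graph with `c` left vertices and `d` right vertices is an
induced subgraph of `B_{2c+d, c+1}`. -/
theorem stmt_9 (c d : ℕ) (Adj : Fin c → Fin d → Prop) :
    ∃ (f : Fin c → Fin (2 * c + d)) (g : Fin d → Finset (Fin (2 * c + d))),
      Function.Injective f ∧ Function.Injective g ∧
      (∀ v, (g v).card = c + 1) ∧
      (∀ u v, Adj u v ↔ f u ∈ g v) := by
  classical
  let e : Fin c ⊕ Fin c ⊕ Fin d ≃ Fin (2 * c + d) :=
    Fintype.equivFinOfCardEq (by simp only [Fintype.card_sum, Fintype.card_fin]; ring)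
  refine ⟨fun u => e (Sum.inl u), fun v => (paddedNeighbors Adj v).map e.toEmbedding,
    e.injective.comp Sum.inl_injective,
    (map_injective e.toEmbedding).comp (paddedNeighbors_injective Adj),
    fun v => ?_, fun u v => ?_⟩
  · rw [card_map, card_paddedNeighbors, Fintype.card_fin]
  · rw [mem_map_equiv, Equiv.symm_apply_apply, inl_mem_paddedNeighbors]
end

section
/- For every bipartite graph G, there exist positive integers n and k such that for every 2-coloring of the edges of B_{n,k}, there is an induced monochromatic copy of G: injections of the left vertices of G into [n] and of the right vertices of G into the k-subsets of [n] preserving both adjacency and non-adjacency, such that all edges of the image receive the same color. -/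
/-!
Colour each `(2c+1)`-subset `T` by its rank pattern, the colours of the edges `(x, T)` listed by
the rank of `x` in `T`. Hypergraph Ramsey, proved through end-homogeneous sequences, gives a set
`H` of size `(2c+1)(d+1)` on which this pattern is a constant `ψ`, and by pigeonhole `ψ` takes one
colour on `c` ranks `ρ 0, …, ρ (c-1)`. View `H` as a grid of `2c+1` rows and `d+1` columns, ordered
row by row. Put the left vertex `i` in row `ρ i`, column `0`; the right vertex `j` becomes the set
that picks one point from each row: column `0` in row `ρ i` if `i` is adjacent to `j`, its private
column `j+1` otherwise. Then `i` has rank `ρ i` in the set of each neighbour `j`, so every edge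
has colour `ψ (ρ i) = col`, and a row outside the image of `ρ` tells the right vertices apart.
-/

open Finset Function

section HypergraphRamsey

variable {α κ : Type*}

def HasFiniteRamsey (α κ : Type*) (k : ℕ) : Prop :=
  ∀ h : ℕ, ∃ N : ℕ, ∀ (γ : Finset α → κ) (V : Finset α), N ≤ #V →
    ∃ H ⊆ V, h ≤ #H ∧ ∃ C : κ, ∀ T ⊆ H, #T = k → γ T = C

def IsEndHomogeneous [DecidableEq α] (γ : Finset α → κ) (k : ℕ) {L : ℕ} (a : Fin L ↪ α)
    (cf : Fin L → κ) : Prop :=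
  ∀ i (T : Finset α), T ⊆ (Ioi i).map a → #T = k → γ (insert (a i) T) = cf i

theorem hasFiniteRamsey_zero : HasFiniteRamsey α κ 0 := fun h =>
  ⟨h, fun γ V hV => ⟨V, subset_rfl, hV, γ ∅, fun _ _ hT => by rw [card_eq_zero.1 hT]⟩⟩

section EndHomogeneous

variable [DecidableEq α]

theorem HasFiniteRamsey.exists_isEndHomogeneous {k : ℕ} (hk : HasFiniteRamsey α κ k) (L : ℕ) :
    ∃ N : ℕ, ∀ (γ : Finset α → κ) (V : Finset α), N ≤ #V →
      ∃ (a : Fin L ↪ α) (cf : Fin L → κ), (∀ i, a i ∈ V) ∧ IsEndHomogeneous γ k a cf := by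
  induction L with
  | zero => exact ⟨0, fun _ _ _ => ⟨⟨Fin.elim0, fun i => i.elim0⟩, Fin.elim0, Fin.rec0, Fin.rec0⟩⟩
  | succ L ih =>
    obtain ⟨nL, hL⟩ := ih
    obtain ⟨N, hN⟩ := hk nL
    refine ⟨N + 1, fun γ V hV => ?_⟩
    obtain ⟨x₀, hx₀⟩ : V.Nonempty := card_pos.1 (by omega)
    -- first term `x₀`; the rest is taken inside a set on which `γ (insert x₀ ·)` is constant
    obtain ⟨H, hHV, hHcard, C₀, hC₀⟩ :=
      hN (fun T => γ (insert x₀ T)) (V.erase x₀) (by rw [card_erase_of_mem hx₀]; omega)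
    obtain ⟨a, cf, haH, ha⟩ := hL γ H hHcard
    have hx₀a : x₀ ∉ Set.range a := by
      rintro ⟨i, rfl⟩
      exact notMem_erase _ _ (hHV (haH i))
    let a' : Fin (L + 1) ↪ α := ⟨Fin.cons x₀ a, Fin.cons_injective_iff.2 ⟨hx₀a, a.injective⟩⟩
    have ha' : (Fin.succEmb L).trans a' = a := by ext; simp [a']
    refine ⟨a', Fin.cons C₀ cf, fun i => ?_, fun i T hT hTk => ?_⟩
    · cases i using Fin.cases with
      | zero => exact hx₀
      | succ i => exact mem_of_mem_erase (hHV (haH i))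
    · cases i using Fin.cases with
      | zero =>
        rw [Fin.Ioi_zero_eq_map, map_map, ha'] at hT
        refine hC₀ T (fun x hx => ?_) hTk
        obtain ⟨j, -, rfl⟩ := mem_map.1 (hT hx)
        exact haH j
      | succ i =>
        rw [← Fin.map_succEmb_Ioi, map_map, ha'] at hT
        exact ha i T hT hTk

theorem IsEndHomogeneous.eq_of_subset_map {γ : Finset α → κ} {k L : ℕ} {a : Fin L ↪ α}
    {cf : Fin L → κ} (ha : IsEndHomogeneous γ k a cf) {D : Finset (Fin L)} {C : κ}
    (hD : ∀ i ∈ D, cf i = C) {T : Finset α} (hT : T ⊆ D.map a) (hTk : #T = k + 1) :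
    γ T = C := by
  obtain ⟨J, hJD, rfl⟩ := subset_map_iff.1 hT
  rw [card_map] at hTk
  have hJ : J.Nonempty := card_pos.1 (by omega)
  have hmin := J.min'_mem hJ
  have hJ_eq : insert (a (J.min' hJ)) ((J.erase (J.min' hJ)).map a) = J.map a := by
    rw [← map_insert, insert_erase hmin]
  rw [← hJ_eq, ha _ _ (map_subset_map.2 fun j hj => mem_Ioi.2 (J.min'_lt_of_mem_erase_min' hJ hj))
    (by rw [card_map, card_erase_of_mem hmin]; omega)]
  exact hD _ (hJD hmin)

end EndHomogeneous

theorem HasFiniteRamsey.succ [Fintype κ] {k : ℕ} (hk : HasFiniteRamsey α κ k) :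
    HasFiniteRamsey α κ (k + 1) := by
  classical
  intro h
  obtain ⟨N, hN⟩ := hk.exists_isEndHomogeneous (Fintype.card κ * h)
  refine ⟨N, fun γ V hV => ?_⟩
  have : Nonempty κ := ⟨γ ∅⟩
  obtain ⟨a, cf, haV, ha⟩ := hN γ V hV
  obtain ⟨C, hC⟩ := Fintype.exists_le_card_fiber_of_mul_le_card (n := h) cf (by simp)
  refine ⟨({i | cf i = C} : Finset _).map a, fun x hx => ?_, by rwa [card_map], C,
    fun T hT hTk => ha.eq_of_subset_map (fun i hi => (mem_filter.1 hi).2) hT hTk⟩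
  obtain ⟨i, -, rfl⟩ := mem_map.1 hx
  exact haV i

theorem hasFiniteRamsey [Fintype κ] (k : ℕ) : HasFiniteRamsey α κ k := by
  induction k with
  | zero => exact hasFiniteRamsey_zero
  | succ k ih => exact ih.succ

end HypergraphRamsey

theorem exists_embedding_forall_eq {β κ : Type*} [Fintype β] [Fintype κ] [Nonempty κ]
    (ψ : β → κ) {c : ℕ} (hc : Fintype.card κ * c ≤ Fintype.card β) :
    ∃ (col : κ) (ρ : Fin c ↪ β), ∀ i, ψ (ρ i) = col := by
  classical
  obtain ⟨col, hcol⟩ := Fintype.exists_le_card_fiber_of_mul_le_card ψ hc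
  obtain ⟨ρ⟩ : Nonempty (Fin c ↪ {x // ψ x = col}) :=
    Function.Embedding.nonempty_of_card_le (by simpa [Fintype.card_subtype] using hcol)
  exact ⟨col, ρ.trans (Embedding.subtype _), fun i => (ρ i).2⟩

section InducedCopy

variable {c d k : ℕ} (Adj : Fin c → Fin d → Prop) (ρ : Fin c ↪ Fin k)

open Classical in
noncomputable def gridHyperedge (j : Fin d) : Fin k ↪o Fin k ×ₗ Fin (d + 1) :=
  OrderEmbedding.ofStrictMono
    (fun r => toLex (r, if ∃ i, Adj i j ∧ ρ i = r then 0 else j.succ))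
    fun _ _ h => Prod.Lex.toLex_lt_toLex.2 (Or.inl h)

open Classical in
theorem gridHyperedge_apply (j : Fin d) (r : Fin k) :
    gridHyperedge Adj ρ j r = toLex (r, if ∃ i, Adj i j ∧ ρ i = r then 0 else j.succ) :=
  rfl

theorem gridHyperedge_apply_of_adj {i : Fin c} {j : Fin d} (h : Adj i j) :
    gridHyperedge Adj ρ j (ρ i) = toLex (ρ i, 0) := by
  rw [gridHyperedge_apply, if_pos ⟨i, h, rfl⟩]

theorem toLex_mem_range_gridHyperedge_iff {i : Fin c} {j : Fin d} :
    toLex (ρ i, (0 : Fin (d + 1))) ∈ Set.range (gridHyperedge Adj ρ j) ↔ Adj i j := by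
  refine ⟨fun ⟨r, hr⟩ => ?_, fun h => ⟨ρ i, gridHyperedge_apply_of_adj Adj ρ h⟩⟩
  rw [gridHyperedge_apply, EmbeddingLike.apply_eq_iff_eq, Prod.mk.injEq] at hr
  obtain ⟨rfl, hr⟩ := hr
  split_ifs at hr with hadj
  · obtain ⟨i', hi', hii'⟩ := hadj
    rwa [← ρ.injective hii']
  · exact absurd hr (Fin.succ_ne_zero j)

theorem injective_range_gridHyperedge (hk : c < k) :
    Injective fun j => Set.range (gridHyperedge Adj ρ j) := by
  obtain ⟨r₀, hr₀⟩ : ∃ r₀, r₀ ∉ Set.range ρ := by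
    by_contra! h
    have := Fintype.card_le_of_surjective ρ h
    simp only [Fintype.card_fin] at this
    omega
  -- row `r₀` meets no vertex, so there every hyperedge sits in its private column
  have hfree : ∀ j, ¬ ∃ i, Adj i j ∧ ρ i = r₀ := fun j ⟨i, _, hi⟩ => hr₀ ⟨i, hi⟩
  intro j j' hjj'
  obtain ⟨r, hr⟩ : gridHyperedge Adj ρ j' r₀ ∈ Set.range (gridHyperedge Adj ρ j) := by
    rw [show Set.range (gridHyperedge Adj ρ j) = _ from hjj']
    exact ⟨r₀, rfl⟩
  rw [gridHyperedge_apply, gridHyperedge_apply, EmbeddingLike.apply_eq_iff_eq, Prod.mk.injEq] at hr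
  obtain ⟨rfl, hr⟩ := hr
  rw [if_neg (hfree j), if_neg (hfree j')] at hr
  exact Fin.succ_injective _ hr

end InducedCopy

theorem exists_induced_copy_with_ranks {α : Type*} [LinearOrder α] {c d k : ℕ}
    (Adj : Fin c → Fin d → Prop) (ρ : Fin c ↪ Fin k) (hk : c < k) (H : Finset α)
    (hH : k * (d + 1) ≤ #H) :
    ∃ (f : Fin c → α) (g : Fin d → Finset α), Injective f ∧ Injective g ∧ (∀ i, f i ∈ H) ∧
      (∀ j, g j ⊆ H ∧ #(g j) = k) ∧ (∀ i j, Adj i j ↔ f i ∈ g j) ∧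
      ∀ j (hj : #(g j) = k) i, Adj i j → (g j).orderEmbOfFin hj (ρ i) = f i := by
  let φ : Fin k ×ₗ Fin (d + 1) ↪o α :=
    (Fintype.orderIsoFinOfCardEq _ (by simp)).symm.toOrderEmbedding.trans (H.orderEmbOfCardLe hH)
  have hφ : ∀ x, φ x ∈ H := fun x => H.orderEmbOfCardLe_mem hH _
  let e j := (gridHyperedge Adj ρ j).trans φ
  let f i := φ (toLex (ρ i, 0))
  let g j := univ.map (e j).toEmbedding
  have hg : ∀ j, (g j : Set α) = φ '' Set.range (gridHyperedge Adj ρ j) := fun j => by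
    simp [g, e, Set.range_comp]
  refine ⟨f, g, fun i i' h => ρ.injective (by simpa [f] using h), fun j j' h => ?_, fun i => hφ _,
    fun j => ⟨fun x hx => ?_, by simp [g]⟩, fun i j => ?_, fun j hj i h => ?_⟩
  · exact injective_range_gridHyperedge Adj ρ hk
      (φ.injective.image_injective (by rw [← hg, ← hg, h]))
  · obtain ⟨r, -, rfl⟩ := mem_map.1 hx
    exact hφ _
  · rw [← mem_coe, hg, φ.injective.mem_set_image, toLex_mem_range_gridHyperedge_iff]
  · rw [← orderEmbOfFin_unique' hj (f := e j) fun r => mem_map_of_mem _ (mem_univ r)]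
    simp [e, f, gridHyperedge_apply_of_adj Adj ρ h]

noncomputable def rankPattern {α κ : Type*} [LinearOrder α] [Inhabited κ] (k : ℕ)
    (COL : α → Finset α → κ) (T : Finset α) : Fin k → κ :=
  if h : #T = k then fun r => COL (T.orderEmbOfFin h r) T else default

theorem rankPattern_of_card_eq {α κ : Type*} [LinearOrder α] [Inhabited κ] {k : ℕ}
    (COL : α → Finset α → κ) {T : Finset α} (h : #T = k) (r : Fin k) :
    rankPattern k COL T r = COL (T.orderEmbOfFin h r) T := by
  simp [rankPattern, h]

/-- Induced Bipartite Ramsey Theorem: for every bipartite graph `G` there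
exist `n, k` such that every 2-coloring of the edges of `B_{n,k}` contains an
induced monochromatic copy of `G`. -/
theorem stmt_10 (c d : ℕ) (Adj : Fin c → Fin d → Prop) :
    ∃ n k : ℕ, 0 < n ∧ 0 < k ∧
      ∀ COL : ℕ → Finset ℕ → Fin 2,
        ∃ (f : Fin c → ℕ) (g : Fin d → Finset ℕ) (col : Fin 2),
          Function.Injective f ∧ Function.Injective g ∧
          (∀ i, f i ∈ Finset.Icc 1 n) ∧
          (∀ j, g j ⊆ Finset.Icc 1 n ∧ (g j).card = k) ∧
          (∀ i j, Adj i j ↔ f i ∈ g j) ∧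
          (∀ i j, Adj i j → COL (f i) (g j) = col) := by
  obtain ⟨N, hN⟩ := hasFiniteRamsey (α := ℕ) (κ := Fin (2 * c + 1) → Fin 2) (2 * c + 1)
    ((2 * c + 1) * (d + 1))
  refine ⟨N + 1, 2 * c + 1, N.succ_pos, by omega, fun COL => ?_⟩
  obtain ⟨H, hHV, hHcard, ψ, hψ⟩ := hN (rankPattern _ COL) (Icc 1 (N + 1)) (by simp)
  obtain ⟨col, ρ, hρ⟩ := exists_embedding_forall_eq ψ (c := c) (by simp)
  obtain ⟨f, g, hf, hg, hfH, hgH, hadj, hrank⟩ :=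
    exists_induced_copy_with_ranks Adj ρ (by omega) H hHcard
  refine ⟨f, g, col, hf, hg, fun i => hHV (hfH i), fun j => ⟨(hgH j).1.trans hHV, (hgH j).2⟩,
    hadj, fun i j hij => ?_⟩
  rw [← hrank j (hgH j).2 i hij, ← rankPattern_of_card_eq COL, hψ _ (hgH j).1 (hgH j).2, hρ]
end

section
/- Let s = ab + b − 1 and L = {b, 2b, ..., ab} ⊆ [s]. For every b-element subset S = {x₁ < ... < x_b} of L and every b-element index set I = {i₁ < ... < i_b} ⊆ [2b−1], there exists a (2b−1)-element subset X of [s] such that X ∩ L = S and, writing X = {z₁ < ... < z_{2b−1}}, we have z_{i_j} = x_j for all j = 1,...,b. -/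
/-!
Enumerate `S` as `x₀ < ⋯ < x_{b-1}` and `I` as `p₀ < ⋯ < p_{b-1}`, and send the position `i` to
`x_j - (p_j - i)`, where `p_j` is the first position of `I` at or after `i` (past the last one, to
`x_{b-1} + (i - p_{b-1})`). Every position lies within `b - 1` of its `p_j`, so positions outside
`I` land strictly between two multiples of `b`; and since consecutive `x_j` differ by at least
`b` while consecutive `p_j` differ by at most `b`, the map is strictly increasing. Its image is `X`.
-/

open Finset

namespace Fin

variable {k m : ℕ} {f : Fin k → Fin m}

lemma val_le_val_of_strictMono (hf : StrictMono f) (j : Fin k) : (j : ℕ) ≤ f j := by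
  simpa using card_le_card_of_injOn f (s := Iio j) (t := Iio (f j))
    (fun i hi => by simpa using hf (by simpa using hi)) hf.injective.injOn

lemma val_add_le_of_strictMono (hf : StrictMono f) (j : Fin k) : (f j : ℕ) + k ≤ m + j := by
  have := card_le_card_of_injOn f (s := Ioi j) (t := Ioi (f j))
    (fun i hi => by simpa using hf (by simpa using hi)) hf.injective.injOn
  simp only [card_Ioi] at this
  have := j.isLt
  have := (f j).isLt
  omega

end Fin

section CountBelow

variable {n m : ℕ}

def countBelow (p : Fin n ↪o Fin m) (i : Fin m) : ℕ := #{j | p j < i}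

variable {p : Fin n ↪o Fin m}

lemma lt_countBelow_iff {i : Fin m} {j : Fin n} : (j : ℕ) < countBelow p i ↔ p j < i := by
  constructor
  · intro hj
    by_contra! hij
    have : countBelow p i ≤ j := by
      simpa [countBelow] using card_le_card (s := {t | p t < i}) (t := Iio j) fun t ht => by
        simp only [mem_filter, mem_univ, true_and] at ht
        simpa using p.lt_iff_lt.1 (ht.trans_le hij)
    omega
  · intro hji
    have : (j : ℕ) + 1 ≤ countBelow p i := by
      simpa [countBelow] using card_le_card (s := Iic j) (t := {t | p t < i}) fun t ht => by
        simpa using (p.monotone (mem_Iic.1 ht)).trans_lt hji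
    omega

lemma countBelow_le_val (i : Fin m) : countBelow p i ≤ i := by
  simpa [countBelow] using card_le_card_of_injOn p (s := {t | p t < i}) (t := Iio i)
    (fun t ht => by simpa using ht) p.injective.injOn

lemma countBelow_mono : Monotone (countBelow p) := fun _ _ h =>
  card_le_card fun t ht => by simpa using (mem_filter.1 ht).2.trans_le h

lemma countBelow_apply (j : Fin n) : countBelow p (p j) = j := by
  simp [countBelow, p.lt_iff_lt, filter_gt_eq_Iio]

end CountBelow

section Interpolate

variable {n m : ℕ}

/-- The index of the first position of `p` at or after `i`, or the last index if there is none. -/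
def nearestIndex (p : Fin (n + 1) ↪o Fin m) (i : Fin m) : Fin (n + 1) :=
  ⟨min (countBelow p i) n, by omega⟩

def interpolate (p : Fin (n + 1) ↪o Fin m) (x : Fin (n + 1) → ℕ) (i : Fin m) : ℕ :=
  i + (x (nearestIndex p i) - p (nearestIndex p i))

variable {p : Fin (n + 1) ↪o Fin m}

lemma nearestIndex_mono : Monotone (nearestIndex p) := fun _ _ h =>
  Fin.le_def.2 (min_le_min_right n (countBelow_mono h))

lemma nearestIndex_apply (j : Fin (n + 1)) : nearestIndex p (p j) = j :=
  Fin.ext (by simp [nearestIndex, countBelow_apply, Nat.le_of_lt_succ j.isLt])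

lemma abs_sub_nearestIndex_le (i : Fin m) :
    |(i : ℤ) - p (nearestIndex p i)| + (n + 1) ≤ m := by
  set j := nearestIndex p i
  have hlo := Fin.val_le_val_of_strictMono p.strictMono j
  have hhi := Fin.val_add_le_of_strictMono p.strictMono j
  have hi := i.isLt
  rw [← le_sub_iff_add_le, abs_le]
  rcases le_or_gt (countBelow p i) n with h | h
  · have hj : (j : ℕ) = countBelow p i := min_eq_left h
    have hij : i ≤ p j := not_lt.1 fun hlt => (lt_countBelow_iff.2 hlt).ne hj
    have := countBelow_le_val (p := p) i
    rw [Fin.le_def] at hij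
    omega
  · have hj : (j : ℕ) = n := min_eq_right h.le
    have hji : p j < i := lt_countBelow_iff.1 (by omega)
    rw [Fin.lt_def] at hji
    omega

variable {x : Fin (n + 1) → ℕ}

lemma interpolate_cast (hxp : ∀ j, (p j : ℕ) ≤ x j) (i : Fin m) :
    (interpolate p x i : ℤ) = x (nearestIndex p i) + ((i : ℤ) - p (nearestIndex p i)) := by
  have := hxp (nearestIndex p i)
  simp only [interpolate]
  omega

lemma interpolate_apply (hxp : ∀ j, (p j : ℕ) ≤ x j) (j : Fin (n + 1)) :
    interpolate p x (p j) = x j := by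
  have := hxp j
  simp only [interpolate, nearestIndex_apply]
  omega

lemma interpolate_strictMono (hxp : ∀ j, (p j : ℕ) ≤ x j)
    (hmono : Monotone fun j => (x j : ℤ) - p j) : StrictMono (interpolate p x) := by
  intro i i' h
  have := hmono (nearestIndex_mono (p := p) h.le)
  have := interpolate_cast hxp i
  have := interpolate_cast hxp i'
  rw [Fin.lt_def] at h
  simp only at *
  omega

lemma abs_interpolate_sub_le (hxp : ∀ j, (p j : ℕ) ≤ x j) (i : Fin m) :
    |(interpolate p x i : ℤ) - x (nearestIndex p i)| + (n + 1) ≤ m := by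
  simpa [interpolate_cast hxp] using abs_sub_nearestIndex_le i

end Interpolate

section Multiples

variable {n m b : ℕ} {p : Fin (n + 1) ↪o Fin m} {x : Fin (n + 1) → ℕ}

/-- Consecutive positions are at most `m - n ≤ b` apart, consecutive multiples of `b` at least
`b`. -/
lemma monotone_sub_of_dvd (hx : StrictMono x) (hdvd : ∀ j, b ∣ x j) (hm : m ≤ n + b) :
    Monotone fun j => (x j : ℤ) - p j := by
  refine Fin.monotone_iff_le_succ.2 fun j => ?_
  have hgap : x j.castSucc + b ≤ x j.succ := by
    by_contra! h
    exact (hx j.castSucc_lt_succ).not_ge (Nat.le_of_lt_add_of_dvd h (hdvd _) (hdvd _))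
  have hlo := Fin.val_le_val_of_strictMono p.strictMono j.castSucc
  have hhi := Fin.val_add_le_of_strictMono p.strictMono j.succ
  simp only [Fin.val_castSucc, Fin.val_succ] at hlo hhi
  omega

lemma val_apply_le_of_dvd (hx : StrictMono x) (hdvd : ∀ j, b ∣ x j) (hm : m ≤ n + b)
    (hpos : 0 < x 0) (j : Fin (n + 1)) : (p j : ℕ) ≤ x j := by
  have hj := monotone_sub_of_dvd (p := p) hx hdvd hm (Fin.zero_le j)
  have h0 := Fin.val_add_le_of_strictMono p.strictMono 0
  have hb := Nat.le_of_dvd hpos (hdvd 0)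
  simp only [Fin.val_zero] at hj h0
  omega

lemma dvd_interpolate_iff (hdvd : ∀ j, b ∣ x j) (hm : m ≤ n + b) (hxp : ∀ j, (p j : ℕ) ≤ x j)
    (i : Fin m) : b ∣ interpolate p x i ↔ i ∈ Set.range p := by
  constructor
  · intro h
    have hmod : x (nearestIndex p i) ≡ interpolate p x i [MOD b] :=
      (Nat.modEq_zero_iff_dvd.2 (hdvd _)).trans (Nat.modEq_zero_iff_dvd.2 h).symm
    have hle := abs_interpolate_sub_le hxp i
    have heq := hmod.eq_of_abs_lt (by omega)
    have := interpolate_cast hxp i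
    exact ⟨nearestIndex p i, Fin.ext (by omega)⟩
  · rintro ⟨j, rfl⟩
    rw [interpolate_apply hxp]
    exact hdvd j

end Multiples

lemma mem_image_mul_Icc_iff {a b y : ℕ} (hb : 0 < b) :
    y ∈ (Icc 1 a).image (· * b) ↔ b ∣ y ∧ b ≤ y ∧ y ≤ a * b := by
  constructor
  · intro h
    obtain ⟨c, hc, rfl⟩ := mem_image.1 h
    rw [mem_Icc] at hc
    exact ⟨dvd_mul_left b c, Nat.le_mul_of_pos_left b hc.1, Nat.mul_le_mul_right b hc.2⟩
  · rintro ⟨⟨c, rfl⟩, h1, h2⟩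
    refine mem_image.2 ⟨c, mem_Icc.2 ⟨?_, ?_⟩, mul_comm c b⟩
    · nlinarith
    · nlinarith

lemma image_univ_inter_eq {α β : Type*} [Fintype α] [DecidableEq β] {f : α → β} {I : Finset α}
    {S L : Finset β} (hSL : S ⊆ L) (hIS : I.image f = S) (hfL : ∀ i, f i ∈ L → i ∈ I) :
    univ.image f ∩ L = S := by
  ext y
  simp only [mem_inter, mem_image, mem_univ, true_and]
  constructor
  · rintro ⟨⟨i, rfl⟩, hi⟩
    exact hIS ▸ mem_image_of_mem f (hfL i hi)
  · intro hy
    obtain ⟨i, -, rfl⟩ := mem_image.1 (hIS ▸ hy)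
    exact ⟨⟨i, rfl⟩, hSL hy⟩

theorem stmt_16_general (a b : ℕ) (hb : 0 < b) :
    ∀ S ⊆ (Finset.Icc 1 a).image (· * b), S.card = b →
      ∀ I : Finset (Fin (2 * b - 1)), I.card = b →
        ∃ (X : Finset ℕ) (hX : X.card = 2 * b - 1),
          X ⊆ Finset.Icc 1 (a * b + b - 1) ∧
          X ∩ (Finset.Icc 1 a).image (· * b) = S ∧
          (∀ i : Fin (2 * b - 1), ((X.orderIsoOfFin hX i : ℕ) ∈ S ↔ i ∈ I)) := by
  intro S hSL hS I hI
  obtain ⟨n, rfl⟩ : ∃ n, b = n + 1 := ⟨b - 1, by omega⟩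
  set x := S.orderEmbOfFin hS
  set p := I.orderEmbOfFin hI
  have hxL j : n + 1 ∣ x j ∧ n + 1 ≤ x j ∧ x j ≤ a * (n + 1) :=
    (mem_image_mul_Icc_iff hb).1 (hSL (S.orderEmbOfFin_mem hS j))
  have hdvd j := (hxL j).1
  have hm : 2 * (n + 1) - 1 ≤ n + (n + 1) := by omega
  have hxp := val_apply_le_of_dvd (p := p) x.strictMono hdvd hm (by linarith [(hxL 0).2.1])
  set f := interpolate p x
  have hf : StrictMono f := interpolate_strictMono hxp (monotone_sub_of_dvd x.strictMono hdvd hm)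
  have hX : (univ.image f).card = 2 * (n + 1) - 1 := by
    simp [card_image_of_injective _ hf.injective]
  have hfX : ⇑((univ.image f).orderEmbOfFin hX) = f := (orderEmbOfFin_unique hX (by simp) hf).symm
  have hIS : I.image f = S := by
    rw [← image_orderEmbOfFin_univ I hI, ← image_orderEmbOfFin_univ S hS, image_image]
    exact image_congr fun j _ => interpolate_apply hxp j
  have hfL i (h : f i ∈ (Icc 1 a).image (· * (n + 1))) : i ∈ I := by
    simpa [p] using (dvd_interpolate_iff hdvd hm hxp i).1 ((mem_image_mul_Icc_iff hb).1 h).1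
  refine ⟨univ.image f, hX, ?_, image_univ_inter_eq hSL hIS hfL, fun i => ?_⟩
  · simp only [subset_iff, mem_image, mem_univ, true_and, mem_Icc, forall_exists_index]
    rintro _ i rfl
    have hdist := abs_interpolate_sub_le hxp i
    have := (hxL (nearestIndex p i)).2
    rw [← le_sub_iff_add_le, abs_le] at hdist
    simp only [f]
    omega
  · rw [coe_orderIsoOfFin_apply, hfX]
    exact ⟨fun h => hfL i (hSL h), fun h => hIS ▸ mem_image_of_mem f h⟩

/-- Combinatorial core of the induced `B_{a,b}` Ramsey theorem: for every
`b`-subset `S` of `L = {b, 2b, …, ab}` and every `b`-element index set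
`I ⊆ [2b-1]`, there is a `(2b-1)`-subset `X` of `[ab+b-1]` with `X ∩ L = S`
whose elements at the index positions `I` are exactly the elements of `S`
(in increasing order). -/
theorem stmt_16 (a b : ℕ) (hb : 0 < b) (hba : b ≤ a) :
    ∀ S ⊆ (Finset.Icc 1 a).image (· * b), S.card = b →
      ∀ I : Finset (Fin (2 * b - 1)), I.card = b →
        ∃ (X : Finset ℕ) (hX : X.card = 2 * b - 1),
          X ⊆ Finset.Icc 1 (a * b + b - 1) ∧
          X ∩ (Finset.Icc 1 a).image (· * b) = S ∧
          (∀ i : Fin (2 * b - 1), ((X.orderIsoOfFin hX i : ℕ) ∈ S ↔ i ∈ I)) :=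
  stmt_16_general a b hb
end
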